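/- For α ≥ -1/2 and m ∈ ℕ, the function f_{α,m}(λ) = j_α(λ)² / ∏_{k=1}^{m+1}(1 - λ²/q_{α,k}²) extends to an even entire function of exponential type 2, and its restriction to [0,∞) satisfies f_{α,m}(λ) = O(λ^{-2α-2m-3}) as λ → ∞; in particular ∫_0^∞ λ^{2m} |f_{α,m}(λ)| λ^{2α+1} dλ < ∞. -/

import Mathlib

open Finset

/-- The normalized Bessel function `j_α`, given by its power series. -/
noncomputable def besselJ (α : ℝ) (x : ℝ) : ℝ :=
  ∑' k : ℕ, (-1 : ℝ) ^ k * Real.Gamma (α + 1) * (x / 2) ^ (2 * k) /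
    ((Nat.factorial k : ℝ) * Real.Gamma ((k : ℝ) + α + 1))

/-!
Write `j_α(x) = E(x²)`. For `α ≥ -1/2` the coefficients of the power series `E` are bounded by
`1/(2k)!`, so `E` is entire with `|E(w)| ≤ exp √|w|`. Dividing `E` by `P(w) = ∏ (1 - w/q_k²)`
over its first `m + 1` zeros leaves an entire `H`, and `F(z) = P(z²) H(z²)²` equals
`E(z²)²/P(z²)`; since `|P(z²)| ≥ 1` far out, `|F(z)| ≤ C e^{2|z|}`.

For the decay, `g(x) = x^{α+1/2} j_α(x)` solves `g'' + g = (α² - 1/4) x⁻² g`, so the energy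
`(g² + g'²) e^{|α² - 1/4|/x}` is nonincreasing on `[1, ∞)` and `g` is bounded. Hence
`j_α(x) = O(x^{-α-1/2})`, and dividing `j_α²` by `|P(x²)| ≍ x^{2m+2}` gives the rate
`x^{-2α-2m-3}`, which makes the weighted integral converge.
-/

open Real Set MeasureTheory
open scoped Nat

lemma factorial_two_mul_succ (k : ℕ) :
    ((2 * (k + 1))! : ℝ) = (2 * k + 2) * (2 * k + 1) * (2 * k)! := by
  rw [show 2 * (k + 1) = 2 * k + 1 + 1 by ring, Nat.factorial_succ, Nat.factorial_succ]
  push_cast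
  ring

section PowerSeries

variable {𝕜 : Type*} [RCLike 𝕜]

noncomputable def powerSum (c : ℕ → 𝕜) (w : 𝕜) : 𝕜 := ∑' k, c k * w ^ k

def derivCoeff (c : ℕ → 𝕜) (k : ℕ) : 𝕜 := (k + 1) * c (k + 1)

def InvFactorialTwoMulBounded (c : ℕ → 𝕜) : Prop := ∀ k, ‖c k‖ ≤ ((2 * k)! : ℝ)⁻¹

lemma hasSum_pow_div_factorial_two_mul {r : ℝ} (hr : 0 ≤ r) :
    HasSum (fun k : ℕ => r ^ k / (2 * k)!) (cosh √r) := by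
  simpa only [pow_mul, sq_sqrt hr] using Real.hasSum_cosh √r

namespace InvFactorialTwoMulBounded

variable {c : ℕ → 𝕜}

lemma norm_mul_pow_le (hc : InvFactorialTwoMulBounded c) (w : 𝕜) (k : ℕ) :
    ‖c k * w ^ k‖ ≤ ‖w‖ ^ k / (2 * k)! := by
  rw [norm_mul, norm_pow, div_eq_inv_mul]
  exact mul_le_mul_of_nonneg_right (hc k) (by positivity)

lemma summable (hc : InvFactorialTwoMulBounded c) (w : 𝕜) :
    Summable fun k => c k * w ^ k :=
  .of_norm_bounded (hasSum_pow_div_factorial_two_mul (norm_nonneg w)).summable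
    (hc.norm_mul_pow_le w)

lemma norm_powerSum_le (hc : InvFactorialTwoMulBounded c) (w : 𝕜) :
    ‖powerSum c w‖ ≤ exp √‖w‖ :=
  calc ‖powerSum c w‖ ≤ cosh √‖w‖ := tsum_of_norm_bounded
        (hasSum_pow_div_factorial_two_mul (norm_nonneg w)) (hc.norm_mul_pow_le w)
    _ ≤ exp √‖w‖ := by
        rw [cosh_eq]
        linarith [exp_le_exp.2 (neg_le_self (sqrt_nonneg ‖w‖))]

lemma derivCoeff (hc : InvFactorialTwoMulBounded c) :
    InvFactorialTwoMulBounded (derivCoeff c) := by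
  intro k
  have hk : ‖((k : 𝕜) + 1)‖ = k + 1 := by exact_mod_cast RCLike.norm_natCast (K := 𝕜) (k + 1)
  calc ‖_root_.derivCoeff c k‖ ≤ (k + 1) * ((2 * (k + 1))! : ℝ)⁻¹ := by
        rw [_root_.derivCoeff, norm_mul, hk]
        exact mul_le_mul_of_nonneg_left (hc _) (by positivity)
    _ ≤ ((2 * k)! : ℝ)⁻¹ := by
        rw [factorial_two_mul_succ, ← div_eq_mul_inv, div_le_iff₀ (by positivity)]
        field_simp
        nlinarith

lemma hasDerivAt_powerSum (hc : InvFactorialTwoMulBounded c) (w : 𝕜) :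
    HasDerivAt (powerSum c) (powerSum (_root_.derivCoeff c) w) w := by
  set R := ‖w‖ + 1
  have hu : Summable fun n : ℕ => ‖(n : 𝕜) * c n‖ * R ^ (n - 1) := by
    rw [← summable_nat_add_iff 1]
    refine (hasSum_pow_div_factorial_two_mul (by positivity : 0 ≤ R)).summable.of_nonneg_of_le
      (fun _ => by positivity) fun k => ?_
    simpa [_root_.derivCoeff, div_eq_inv_mul] using
      mul_le_mul_of_nonneg_right (hc.derivCoeff k) (by positivity : 0 ≤ R ^ k)
  have hbound : ∀ n y, y ∈ Metric.ball (0 : 𝕜) R →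
      ‖c n * (n * y ^ (n - 1))‖ ≤ ‖(n : 𝕜) * c n‖ * R ^ (n - 1) := by
    intro n y hy
    rw [mem_ball_zero_iff] at hy
    rw [show c n * (n * y ^ (n - 1)) = n * c n * y ^ (n - 1) by ring, norm_mul, norm_pow]
    gcongr
  have key := hasDerivAt_tsum_of_isPreconnected hu Metric.isOpen_ball
    (convex_ball (0 : 𝕜) R).isPreconnected (fun n y _ => (hasDerivAt_pow n y).const_mul (c n))
    hbound (Metric.mem_ball_self (by positivity)) (hc.summable 0)
    (by simp [R] : w ∈ Metric.ball (0 : 𝕜) R)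
  have hshift : HasSum (fun n : ℕ => c (n + 1) * (((n + 1 : ℕ) : 𝕜) * w ^ (n + 1 - 1)))
      (powerSum (_root_.derivCoeff c) w) := by
    refine (hc.derivCoeff.summable w).hasSum.congr_fun fun n => ?_
    simp only [_root_.derivCoeff, Nat.add_sub_cancel]
    push_cast
    ring
  have hsum_eq :=
    (HasSum.zero_add (f := fun n : ℕ => c n * ((n : 𝕜) * w ^ (n - 1))) hshift).tsum_eq
  simp only [Nat.cast_zero, zero_mul, mul_zero, zero_add] at hsum_eq
  rw [← hsum_eq]
  exact key

lemma hasSum_natCast_mul_mul_pow (hc : InvFactorialTwoMulBounded c) (w : 𝕜) :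
    HasSum (fun k : ℕ => (k : 𝕜) * c k * w ^ k) (w * powerSum (_root_.derivCoeff c) w) := by
  have hshift : HasSum (fun n : ℕ => ((n + 1 : ℕ) : 𝕜) * c (n + 1) * w ^ (n + 1))
      (w * powerSum (_root_.derivCoeff c) w) := by
    refine ((hc.derivCoeff.summable w).hasSum.mul_left w).congr_fun fun n => ?_
    simp only [_root_.derivCoeff]
    push_cast
    ring
  simpa using HasSum.zero_add (f := fun n : ℕ => (n : 𝕜) * c n * w ^ n) hshift

end InvFactorialTwoMulBounded

lemma InvFactorialTwoMulBounded.ofReal {c : ℕ → ℝ} (hc : InvFactorialTwoMulBounded c) :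
    InvFactorialTwoMulBounded fun k => (c k : 𝕜) := fun k => by
  simpa only [RCLike.norm_ofReal, Real.norm_eq_abs] using hc k

end PowerSeries

section BesselCoeff

variable {α : ℝ}

noncomputable def besselCoeff (α : ℝ) (k : ℕ) : ℝ :=
  (-1) ^ k * Gamma (α + 1) / (4 ^ k * k ! * Gamma (k + α + 1))

lemma besselJ_eq_powerSum (α x : ℝ) : besselJ α x = powerSum (besselCoeff α) (x ^ 2) := by
  refine tsum_congr fun k => ?_
  rw [besselCoeff, pow_mul, div_pow, div_pow]
  norm_num
  ring

lemma besselCoeff_zero (hα : -1 < α) : besselCoeff α 0 = 1 := by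
  simp [besselCoeff, (Gamma_pos_of_pos (by linarith : 0 < α + 1)).ne']

lemma besselCoeff_succ (hα : -1 < α) (k : ℕ) :
    4 * (k + 1) * (k + α + 1) * besselCoeff α (k + 1) = -besselCoeff α k := by
  have hk : 0 < (k : ℝ) + α + 1 := by linarith [k.cast_nonneg (α := ℝ)]
  have hΓ := Gamma_pos_of_pos hk
  rw [besselCoeff, besselCoeff, Nat.factorial_succ, Nat.cast_succ,
    show (k : ℝ) + 1 + α + 1 = (k + α + 1) + 1 by ring, Gamma_add_one hk.ne']
  push_cast
  field_simp
  ring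

lemma invFactorialTwoMulBounded_besselCoeff (hα : -1/2 ≤ α) :
    InvFactorialTwoMulBounded (besselCoeff α) := by
  intro k
  rw [Real.norm_eq_abs]
  induction k with
  | zero => simp [besselCoeff_zero (by linarith : -1 < α)]
  | succ k ih =>
    -- `α ≥ -1/2` is exactly what makes `4 (k + 1) (k + α + 1) ≥ (2k + 2) (2k + 1)`.
    have hpos : 0 < 4 * (k + 1) * (k + α + 1) := by
      have := k.cast_nonneg (α := ℝ); nlinarith
    have hrec : |besselCoeff α (k + 1)| * (4 * (k + 1) * (k + α + 1)) = |besselCoeff α k| := by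
      rw [← abs_of_pos hpos, ← abs_mul, mul_comm, besselCoeff_succ (by linarith), abs_neg]
    calc |besselCoeff α (k + 1)| = |besselCoeff α k| / (4 * (k + 1) * (k + α + 1)) := by
          rw [← hrec, mul_div_cancel_right₀ _ hpos.ne']
      _ ≤ ((2 * k)! : ℝ)⁻¹ / ((2 * k + 2) * (2 * k + 1)) :=
          div_le_div₀ (by positivity) ih (by positivity) (by nlinarith)
      _ = ((2 * (k + 1))! : ℝ)⁻¹ := by
          rw [factorial_two_mul_succ, mul_inv, div_eq_mul_inv, mul_comm]

lemma besselCoeff_ode (hα : -1/2 ≤ α) (w : ℝ) :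
    4 * w * powerSum (derivCoeff (derivCoeff (besselCoeff α))) w
      + (4 * α + 4) * powerSum (derivCoeff (besselCoeff α)) w
      + powerSum (besselCoeff α) w = 0 := by
  have hc := invFactorialTwoMulBounded_besselCoeff hα
  have hsum := (((hc.derivCoeff.hasSum_natCast_mul_mul_pow w).mul_left 4).add
    ((hc.derivCoeff.summable w).hasSum.mul_left (4 * α + 4))).add (hc.summable w).hasSum
  rw [mul_assoc 4]
  refine hsum.unique (hasSum_zero.congr_fun fun k => ?_)
  simp only [derivCoeff]
  linear_combination w ^ k * besselCoeff_succ (by linarith) k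

end BesselCoeff

theorem exists_abs_le_of_hasDerivAt_of_add_eq_div_sq {g g' g'' : ℝ → ℝ} {c : ℝ}
    (hg : ∀ x, 1 ≤ x → HasDerivAt g (g' x) x) (hg' : ∀ x, 1 ≤ x → HasDerivAt g' (g'' x) x)
    (hode : ∀ x, 1 ≤ x → g'' x + g x = c / x ^ 2 * g x) :
    ∃ M, ∀ x, 1 ≤ x → |g x| ≤ M := by
  -- The weight `e^{|c|/x}` absorbs the perturbation `c/x²`, making this energy nonincreasing.
  set L : ℝ → ℝ := fun x => (g x ^ 2 + g' x ^ 2) * exp (|c| * x⁻¹)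
  set L' : ℝ → ℝ := fun x => (2 * g x * g' x + 2 * g' x * g'' x) * exp (|c| * x⁻¹)
    + (g x ^ 2 + g' x ^ 2) * (exp (|c| * x⁻¹) * (|c| * -(x ^ 2)⁻¹))
  have hL : ∀ x, 1 ≤ x → HasDerivAt L (L' x) x := fun x hx => by
    refine ((((hg x hx).pow 2).add ((hg' x hx).pow 2)).mul
      ((hasDerivAt_inv (by positivity)).const_mul |c|).exp).congr_deriv ?_
    simp only [L', Pi.add_apply, Pi.pow_apply]
    push_cast
    ring
  have hL' : ∀ x, 1 ≤ x → L' x ≤ 0 := fun x hx => by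
    have hg'' : g'' x = c / x ^ 2 * g x - g x := by linarith [hode x hx]
    have hcg : 2 * c * (g x * g' x) ≤ |c| * (g x ^ 2 + g' x ^ 2) := by
      cases abs_cases c <;> nlinarith [sq_nonneg (g x - g' x), sq_nonneg (g x + g' x)]
    have hL'x : L' x = exp (|c| * x⁻¹) / x ^ 2
        * (2 * c * (g x * g' x) - |c| * (g x ^ 2 + g' x ^ 2)) := by
      simp only [L', hg'']
      field_simp
      ring
    rw [hL'x]
    exact mul_nonpos_of_nonneg_of_nonpos (by positivity) (by linarith)
  have hanti : AntitoneOn L (Ici 1) := by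
    refine antitoneOn_of_hasDerivWithinAt_nonpos (f' := L') (convex_Ici 1)
      (fun x hx => (hL x hx).continuousAt.continuousWithinAt) (fun x hx => ?_) (fun x hx => ?_)
    · rw [interior_Ici] at hx
      exact (hL x (le_of_lt hx)).hasDerivWithinAt
    · rw [interior_Ici] at hx
      exact hL' x (le_of_lt hx)
  refine ⟨√(L 1), fun x hx => ?_⟩
  rw [← sqrt_sq_eq_abs]
  refine sqrt_le_sqrt ?_
  calc g x ^ 2 ≤ L x := by
        simp only [L]
        nlinarith [one_le_exp (by positivity : 0 ≤ |c| * x⁻¹), sq_nonneg (g' x)]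
    _ ≤ L 1 := hanti self_mem_Ici hx hx

lemma hasDerivAt_rpow_mul_comp_sq {p x : ℝ} {f f' : ℝ → ℝ} (hx : 0 < x)
    (hf : HasDerivAt f (f' (x ^ 2)) (x ^ 2)) :
    HasDerivAt (fun y => y ^ p * f (y ^ 2))
      (x ^ (p - 1) * (p * f (x ^ 2) + 2 * x ^ 2 * f' (x ^ 2))) x := by
  refine ((hasDerivAt_rpow_const (p := p) (Or.inl hx.ne')).mul
    (HasDerivAt.comp (h := fun y : ℝ => y ^ 2) x hf (hasDerivAt_pow 2 x))).congr_deriv ?_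
  rw [show x ^ p = x ^ (p - 1) * x by rw [← rpow_add_one hx.ne', sub_add_cancel]]
  simp only [Function.comp_apply, Nat.cast_ofNat, Nat.add_one_sub_one, pow_one]
  ring

theorem exists_abs_le_mul_rpow_of_bessel_ode {α : ℝ} {e e' e'' : ℝ → ℝ}
    (he : ∀ w, HasDerivAt e (e' w) w) (he' : ∀ w, HasDerivAt e' (e'' w) w)
    (hode : ∀ w, 4 * w * e'' w + (4 * α + 4) * e' w + e w = 0) :
    ∃ K, ∀ x, 1 ≤ x → |e (x ^ 2)| ≤ K * x ^ (-(α + 1/2)) := by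
  set p := α + 1/2
  set f := fun w => p * e w + 2 * w * e' w
  have hf : ∀ w, HasDerivAt f (p * e' w + 2 * e' w + 2 * w * e'' w) w := fun w => by
    refine (((he w).const_mul p).add
      (((hasDerivAt_id w).const_mul 2).mul (he' w))).congr_deriv ?_
    simp only [mul_one, id_eq]
    ring
  -- Liouville normal form: `g(x) = x^p e(x²)` solves `g'' + g = p (p - 1) x⁻² g`.
  obtain ⟨M, hM⟩ := exists_abs_le_of_hasDerivAt_of_add_eq_div_sq (c := p * (p - 1))
    (g := fun x => x ^ p * e (x ^ 2)) (g' := fun x => x ^ (p - 1) * f (x ^ 2))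
    (fun x hx => hasDerivAt_rpow_mul_comp_sq (by linarith) (he _))
    (fun x hx => hasDerivAt_rpow_mul_comp_sq (f' := fun w => p * e' w + 2 * e' w + 2 * w * e'' w)
      (by linarith) (hf _))
    (fun x hx => by
      have hx0 : 0 < x := by linarith
      rw [show x ^ p = x ^ (p - 1 - 1) * x ^ 2 by
        rw [← rpow_natCast, ← rpow_add hx0]; congr 1; push_cast; ring]
      simp only [f]
      field_simp
      linear_combination x ^ 2 * hode (x ^ 2) + 4 * x ^ 2 * e' (x ^ 2) * (rfl : p = α + 1/2))
  refine ⟨M, fun x hx => ?_⟩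
  have hx0 : 0 < x := by linarith
  have hg := hM x hx
  rw [abs_mul, abs_of_pos (rpow_pos_of_pos hx0 p)] at hg
  rw [rpow_neg hx0.le, ← div_eq_mul_inv, le_div_iff₀ (rpow_pos_of_pos hx0 p), mul_comm]
  exact hg

lemma exists_abs_besselJ_le {α : ℝ} (hα : -1/2 ≤ α) :
    ∃ K, ∀ x, 1 ≤ x → |besselJ α x| ≤ K * x ^ (-(α + 1/2)) := by
  have hc := invFactorialTwoMulBounded_besselCoeff hα
  simp_rw [besselJ_eq_powerSum]
  exact exists_abs_le_mul_rpow_of_bessel_ode hc.hasDerivAt_powerSum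
    hc.derivCoeff.hasDerivAt_powerSum (besselCoeff_ode hα)

noncomputable def besselEntire (α : ℝ) : ℂ → ℂ := powerSum fun k => (besselCoeff α k : ℂ)

lemma besselEntire_ofReal_sq (α x : ℝ) : besselEntire α ((x : ℂ) ^ 2) = besselJ α x := by
  simp only [besselJ_eq_powerSum, besselEntire, powerSum, Complex.ofReal_tsum]
  push_cast
  rfl

lemma differentiable_besselEntire {α : ℝ} (hα : -1/2 ≤ α) :
    Differentiable ℂ (besselEntire α) := fun w =>
  ((invFactorialTwoMulBounded_besselCoeff hα).ofReal.hasDerivAt_powerSum w).differentiableAt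

lemma norm_besselEntire_le {α : ℝ} (hα : -1/2 ≤ α) (w : ℂ) : ‖besselEntire α w‖ ≤ exp √‖w‖ :=
  (invFactorialTwoMulBounded_besselCoeff hα).ofReal.norm_powerSum_le w

theorem exists_differentiable_eq_prod_one_sub_div_mul {E : ℂ → ℂ} (hE : Differentiable ℂ E)
    {a : ℕ → ℂ} (ha : ∀ k, a k ≠ 0) (hinj : Function.Injective a) (n : ℕ)
    (hzero : ∀ k < n, E (a k) = 0) :
    ∃ H : ℂ → ℂ, Differentiable ℂ H ∧ ∀ w, E w = (∏ k ∈ range n, (1 - w / a k)) * H w := by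
  induction n with
  | zero => exact ⟨E, hE, by simp⟩
  | succ n ih =>
    obtain ⟨H, hH, hEH⟩ := ih fun k hk => hzero k (by omega)
    have hHa : H (a n) = 0 := by
      have hP : ∏ k ∈ range n, (1 - a n / a k) ≠ 0 := prod_ne_zero_iff.2 fun k hk => by
        rw [sub_ne_zero, ne_comm, Ne, div_eq_one_iff_eq (ha k)]
        exact hinj.ne (by rw [Finset.mem_range] at hk; omega)
      simpa [hP, hzero n n.lt_succ_self] using (hEH (a n)).symm
    have hdslope : Differentiable ℂ (dslope H (a n)) := fun w =>
      ((Complex.differentiableOn_dslope Filter.univ_mem).2 hH.differentiableOn).differentiableAt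
        Filter.univ_mem
    refine ⟨fun w => -a n * dslope H (a n) w, (hdslope.const_mul _), fun w => ?_⟩
    have hsub := sub_smul_dslope H (a n) w
    rw [hHa, sub_zero, smul_eq_mul] at hsub
    rw [prod_range_succ, hEH w, ← hsub]
    field_simp [ha n]
    ring

theorem exists_differentiable_mul_prod_eq_sq {E : ℂ → ℂ} (hE : Differentiable ℂ E)
    {a : ℕ → ℂ} (ha : ∀ k, a k ≠ 0) (hinj : Function.Injective a) (n : ℕ)
    (hzero : ∀ k < n, E (a k) = 0) :
    ∃ F : ℂ → ℂ, Differentiable ℂ F ∧ (∀ z, F (-z) = F z) ∧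
      ∀ z, F z * ∏ k ∈ range n, (1 - z ^ 2 / a k) = E (z ^ 2) ^ 2 := by
  obtain ⟨H, hH, hEH⟩ := exists_differentiable_eq_prod_one_sub_div_mul hE ha hinj n hzero
  refine ⟨fun z => (∏ k ∈ range n, (1 - z ^ 2 / a k)) * H (z ^ 2) ^ 2, by fun_prop,
    fun z => by simp only [neg_sq], fun z => by rw [hEH]; ring⟩

lemma norm_div_two_mul_le_norm_one_sub_div {𝕜 : Type*} [NormedField 𝕜] {a w : 𝕜} (ha : a ≠ 0)
    (h : 2 * ‖a‖ ≤ ‖w‖) : ‖w‖ / (2 * ‖a‖) ≤ ‖1 - w / a‖ := by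
  have ha' : 0 < ‖a‖ := norm_pos_iff.2 ha
  calc ‖w‖ / (2 * ‖a‖) ≤ ‖w‖ / ‖a‖ - 1 := by
        rw [div_sub_one ha'.ne', div_le_div_iff₀ (by positivity) ha']
        nlinarith
    _ = ‖w / a‖ - ‖(1 : 𝕜)‖ := by rw [norm_div, norm_one]
    _ ≤ ‖1 - w / a‖ := by rw [norm_sub_rev]; exact norm_sub_norm_le _ _

lemma norm_mul_prod_le_of_mul_prod_eq_sq {F E : ℂ → ℂ} {a : ℕ → ℂ} {n : ℕ} (ha : ∀ k, a k ≠ 0)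
    {z : ℂ} (hFE : F z * ∏ k ∈ range n, (1 - z ^ 2 / a k) = E (z ^ 2) ^ 2)
    (hz : ∀ k ∈ range n, 2 * ‖a k‖ ≤ ‖z‖ ^ 2) :
    ‖F z‖ * ∏ k ∈ range n, ‖z‖ ^ 2 / (2 * ‖a k‖) ≤ ‖E (z ^ 2)‖ ^ 2 := by
  calc ‖F z‖ * ∏ k ∈ range n, ‖z‖ ^ 2 / (2 * ‖a k‖)
      ≤ ‖F z‖ * ‖∏ k ∈ range n, (1 - z ^ 2 / a k)‖ := by
        rw [norm_prod]
        refine mul_le_mul_of_nonneg_left (prod_le_prod (fun k _ => by positivity) fun k hk => ?_)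
          (norm_nonneg _)
        rw [← norm_pow]
        exact norm_div_two_mul_le_norm_one_sub_div (ha k) (by rw [norm_pow]; exact hz k hk)
    _ = ‖E (z ^ 2)‖ ^ 2 := by rw [← norm_mul, hFE, norm_pow]

lemma exists_norm_le_mul_of_isCompact {X E : Type*} [TopologicalSpace X] [SeminormedAddGroup E]
    {f : X → E} {g : X → ℝ} {S K : Set X} {C : ℝ} (hK : IsCompact K) (hKS : K ⊆ S)
    (hf : ContinuousOn f K) (hg : ContinuousOn g K) (hg0 : ∀ x ∈ S, 0 < g x)
    (hout : ∀ x ∈ S, x ∉ K → ‖f x‖ ≤ C * g x) :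
    ∃ C' > 0, ∀ x ∈ S, ‖f x‖ ≤ C' * g x := by
  obtain ⟨M, hM⟩ := hK.exists_bound_of_continuousOn hf
  obtain ⟨N, hN⟩ := hK.exists_bound_of_continuousOn
    (hg.inv₀ fun x hx => (hg0 x (hKS hx)).ne')
  refine ⟨max (max C (M * N)) 1, by positivity, fun x hxS => ?_⟩
  have hgx := hg0 x hxS
  by_cases hxK : x ∈ K
  · have hNg : 1 ≤ N * g x := by
      have := hN x hxK
      rw [Pi.inv_apply, norm_inv, Real.norm_of_nonneg hgx.le] at this
      rwa [← div_le_iff₀ hgx, one_div]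
    calc ‖f x‖ ≤ M := hM x hxK
      _ ≤ M * (N * g x) := le_mul_of_one_le_right ((norm_nonneg _).trans (hM x hxK)) hNg
      _ = M * N * g x := by ring
      _ ≤ _ := mul_le_mul_of_nonneg_right (le_max_of_le_left (le_max_right _ _)) hgx.le
  · exact (hout x hxS hxK).trans
      (mul_le_mul_of_nonneg_right (le_max_of_le_left (le_max_left _ _)) hgx.le)

lemma two_mul_norm_le_sq_of_sqrt_sum_le {ι E : Type*} [SeminormedAddCommGroup E] {s : Finset ι}
    {a : ι → E} {r : ℝ} (h : √(2 * ∑ k ∈ s, ‖a k‖) ≤ r) : ∀ k ∈ s, 2 * ‖a k‖ ≤ r ^ 2 := by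
  intro k hk
  calc 2 * ‖a k‖ ≤ 2 * ∑ k ∈ s, ‖a k‖ := by
        gcongr
        exact single_le_sum (fun i _ => norm_nonneg (a i)) hk
    _ = √(2 * ∑ k ∈ s, ‖a k‖) ^ 2 := (sq_sqrt (by positivity)).symm
    _ ≤ r ^ 2 := pow_le_pow_left₀ (sqrt_nonneg _) h 2

theorem exists_norm_le_mul_exp_of_mul_prod_eq_sq {F E : ℂ → ℂ} (hF : Continuous F)
    {a : ℕ → ℂ} {n : ℕ} (ha : ∀ k, a k ≠ 0)
    (hFE : ∀ z, F z * ∏ k ∈ range n, (1 - z ^ 2 / a k) = E (z ^ 2) ^ 2)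
    (hE : ∀ w, ‖E w‖ ≤ exp √‖w‖) :
    ∃ C > 0, ∀ z, ‖F z‖ ≤ C * exp (2 * ‖z‖) := by
  set R := √(2 * ∑ k ∈ range n, ‖a k‖)
  have hout : ∀ z ∈ univ, z ∉ Metric.closedBall (0 : ℂ) R → ‖F z‖ ≤ 1 * exp (2 * ‖z‖) := by
    intro z _ hz
    rw [Metric.mem_closedBall, dist_zero_right, not_le] at hz
    have hz := two_mul_norm_le_sq_of_sqrt_sum_le hz.le
    have hP : 1 ≤ ∏ k ∈ range n, ‖z‖ ^ 2 / (2 * ‖a k‖) :=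
      one_le_prod fun k hk =>
        (one_le_div (mul_pos two_pos (norm_pos_iff.2 (ha k)))).2 (hz k hk)
    calc ‖F z‖ ≤ ‖F z‖ * ∏ k ∈ range n, ‖z‖ ^ 2 / (2 * ‖a k‖) :=
          le_mul_of_one_le_right (norm_nonneg _) hP
      _ ≤ ‖E (z ^ 2)‖ ^ 2 := norm_mul_prod_le_of_mul_prod_eq_sq ha (hFE z) hz
      _ ≤ exp √‖z ^ 2‖ ^ 2 := by gcongr; exact hE _
      _ = 1 * exp (2 * ‖z‖) := by
        rw [norm_pow, sqrt_sq (norm_nonneg z), ← exp_nat_mul]; push_cast; ring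
  simpa using exists_norm_le_mul_of_isCompact (isCompact_closedBall 0 R) (subset_univ _)
    hF.continuousOn (by fun_prop) (fun z _ => exp_pos _) hout

theorem exists_norm_le_mul_rpow_of_mul_prod_eq_sq {F E : ℂ → ℂ} (hF : Continuous F)
    {a : ℕ → ℂ} {n : ℕ} (ha : ∀ k, a k ≠ 0)
    (hFE : ∀ z, F z * ∏ k ∈ range n, (1 - z ^ 2 / a k) = E (z ^ 2) ^ 2) {K σ : ℝ}
    (hE : ∀ x : ℝ, 1 ≤ x → ‖E ((x : ℂ) ^ 2)‖ ≤ K * x ^ (-σ)) :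
    ∃ C > 0, ∀ x : ℝ, 1 ≤ x → ‖F x‖ ≤ C * x ^ (-(2 * σ + 2 * n)) := by
  set B := ∏ k ∈ range n, 2 * ‖a k‖
  set T := max 1 √(2 * ∑ k ∈ range n, ‖a k‖)
  have hB : 0 < B := prod_pos fun k _ => mul_pos two_pos (norm_pos_iff.2 (ha k))
  have hout : ∀ x ∈ Ici (1 : ℝ), x ∉ Icc 1 T → ‖F x‖ ≤ K ^ 2 * B * x ^ (-(2 * σ + 2 * n)) := by
    intro x hx1 hxT
    rw [Set.mem_Ici] at hx1
    have hTx : T < x := by simpa [hx1] using hxT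
    have hx0 : 0 < x := by linarith
    have hnorm : ‖(x : ℂ)‖ = x := by rw [Complex.norm_real, Real.norm_of_nonneg hx0.le]
    have h := norm_mul_prod_le_of_mul_prod_eq_sq ha (hFE x)
      (two_mul_norm_le_sq_of_sqrt_sum_le (by rw [hnorm]; exact (le_max_right _ _).trans hTx.le))
    rw [hnorm, prod_div_distrib, prod_const, card_range] at h
    have hrpow : x ^ (-(2 * σ + 2 * n)) = (x ^ (-σ)) ^ 2 / (x ^ 2) ^ n := by
      rw [← rpow_natCast (x ^ (-σ)), ← rpow_mul hx0.le, ← pow_mul, ← rpow_natCast x,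
        ← rpow_sub hx0]
      push_cast
      ring_nf
    calc ‖F x‖ = ‖F x‖ * ((x ^ 2) ^ n / B) * (B / (x ^ 2) ^ n) := by field_simp
      _ ≤ (K * x ^ (-σ)) ^ 2 * (B / (x ^ 2) ^ n) := by
          gcongr
          exact h.trans (pow_le_pow_left₀ (norm_nonneg _) (hE x hx1) 2)
      _ = K ^ 2 * B * x ^ (-(2 * σ + 2 * n)) := by rw [hrpow]; ring
  exact exists_norm_le_mul_of_isCompact (isCompact_Icc (a := 1) (b := T))
    Icc_subset_Ici_self (hF.comp Complex.continuous_ofReal).continuousOn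
    (continuousOn_id.rpow_const fun x hx => Or.inl (one_pos.trans_le hx.1).ne')
    (fun x hx => rpow_pos_of_pos (one_pos.trans_le hx) _) hout

lemma integrableOn_Ioi_zero_of_le_mul_rpow {f : ℝ → ℝ} (hf : Continuous f) {C s : ℝ}
    (hs : 1 < s) (h : ∀ x, 1 ≤ x → ‖f x‖ ≤ C * x ^ (-s)) : IntegrableOn f (Ioi 0) := by
  rw [← Ioc_union_Ioi_eq_Ioi zero_le_one]
  refine (hf.integrableOn_Icc.mono_set Ioc_subset_Icc_self).union ?_
  refine ((integrableOn_Ioi_rpow_of_lt (a := -s) (by linarith) one_pos).const_mul C).mono'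
    hf.aestronglyMeasurable ?_
  filter_upwards [ae_restrict_mem measurableSet_Ioi] with x hx using h x (le_of_lt hx)

lemma integrableOn_pow_mul_norm_mul_rpow {F : ℂ → ℂ} (hF : Continuous F) {α C : ℝ}
    (hα : -1/2 ≤ α) (m : ℕ)
    (hdecay : ∀ x : ℝ, 1 ≤ x → ‖F x‖ ≤ C * x ^ (-(2 * α + 2 * (m : ℝ) + 3))) :
    IntegrableOn (fun x : ℝ => x ^ (2 * m) * ‖F x‖ * x ^ (2 * α + 1)) (Ioi 0) := by
  refine integrableOn_Ioi_zero_of_le_mul_rpow (C := C) (s := 2)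
    (by fun_prop (disch := linarith)) one_lt_two fun x hx => ?_
  have hx0 : 0 < x := one_pos.trans_le hx
  rw [Real.norm_of_nonneg (by positivity)]
  calc x ^ (2 * m) * ‖F x‖ * x ^ (2 * α + 1)
      ≤ x ^ (2 * m) * (C * x ^ (-(2 * α + 2 * (m : ℝ) + 3))) * x ^ (2 * α + 1) := by
        gcongr
        exact hdecay x hx
    _ = C * x ^ (-2 : ℝ) := by
        rw [← rpow_natCast, mul_left_comm, mul_assoc, ← rpow_add hx0, ← rpow_add hx0]
        push_cast
        ring_nf

theorem f_alpha_m_entire_general (α : ℝ) (hα : α ≥ -1/2) (m : ℕ) (q : ℕ → ℝ)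
    (hpos : ∀ k, 0 < q k) (hmono : StrictMono q)
    (hzero : ∀ k, besselJ α (q k) = 0) :
    ∃ F : ℂ → ℂ, Differentiable ℂ F ∧ (∀ z, F (-z) = F z) ∧
      (∀ ε > 0, ∃ C > 0, ∀ z : ℂ, ‖F z‖ ≤ C * Real.exp ((2 + ε) * ‖z‖)) ∧
      (∀ lam : ℝ, (∏ k ∈ Finset.range (m + 1), (1 - lam ^ 2 / (q k) ^ 2)) ≠ 0 →
        F lam = ((besselJ α lam ^ 2 /
          ∏ k ∈ Finset.range (m + 1), (1 - lam ^ 2 / (q k) ^ 2) : ℝ) : ℂ)) ∧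
      (∃ C > 0, ∀ lam : ℝ, 1 ≤ lam →
        ‖F lam‖ ≤ C * lam ^ (-(2 * α + 2 * (m : ℝ) + 3))) ∧
      MeasureTheory.IntegrableOn
        (fun lam : ℝ => lam ^ (2 * m) * ‖F lam‖ * lam ^ (2 * α + 1)) (Set.Ioi 0) := by
  set a : ℕ → ℂ := fun k => (q k : ℂ) ^ 2
  have ha : ∀ k, a k ≠ 0 := fun k => pow_ne_zero 2 (Complex.ofReal_ne_zero.2 (hpos k).ne')
  have hinj : Function.Injective a := fun i j hij => hmono.injective <|
    (pow_left_inj₀ (hpos i).le (hpos j).le two_ne_zero).1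
      (by simpa only [a, ← Complex.ofReal_pow, Complex.ofReal_inj] using hij)
  obtain ⟨F, hF, heven, hFE⟩ := exists_differentiable_mul_prod_eq_sq
    (differentiable_besselEntire hα) ha hinj (m + 1)
    fun k _ => by rw [besselEntire_ofReal_sq, hzero, Complex.ofReal_zero]
  obtain ⟨C, hC, hgrowth⟩ :=
    exists_norm_le_mul_exp_of_mul_prod_eq_sq hF.continuous ha hFE (norm_besselEntire_le hα)
  obtain ⟨K, hK⟩ := exists_abs_besselJ_le hα
  obtain ⟨C', hC', hdecay⟩ := exists_norm_le_mul_rpow_of_mul_prod_eq_sq hF.continuous ha hFE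
    (σ := α + 1/2) fun x hx => by simpa [besselEntire_ofReal_sq] using hK x hx
  have hdecay' : ∀ x : ℝ, 1 ≤ x → ‖F x‖ ≤ C' * x ^ (-(2 * α + 2 * (m : ℝ) + 3)) :=
    fun x hx => by convert hdecay x hx using 4; push_cast; ring
  refine ⟨F, hF, heven, fun ε hε => ⟨C, hC, fun z => (hgrowth z).trans ?_⟩, fun x hx => ?_,
    ⟨C', hC', hdecay'⟩, integrableOn_pow_mul_norm_mul_rpow hF.continuous hα m hdecay'⟩
  · gcongr
    nlinarith [norm_nonneg z]
  · have hP : (((∏ k ∈ range (m + 1), (1 - x ^ 2 / q k ^ 2)) : ℝ) : ℂ)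
        = ∏ k ∈ range (m + 1), (1 - (x : ℂ) ^ 2 / a k) := by push_cast; rfl
    rw [Complex.ofReal_div, hP, eq_div_iff (by rwa [← hP, Complex.ofReal_ne_zero]), hFE,
      besselEntire_ofReal_sq]
    push_cast
    rfl

/-- `f_{α,m}(λ) = j_α(λ)²/∏_{k=1}^{m+1}(1 - λ²/q_{α,k}²)` extends to an even entire
function of exponential type `2`, decays like `O(λ^{-2α-2m-3})`, and in particular
`∫_0^∞ λ^{2m} |f_{α,m}(λ)| λ^{2α+1} dλ < ∞`.  Here `q : ℕ → ℝ` enumerates the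
positive zeros of `j_α` in increasing order (`q 0 = q_{α,1}`). -/
theorem f_alpha_m_entire (α : ℝ) (hα : α ≥ -1/2) (m : ℕ) (q : ℕ → ℝ)
    (hpos : ∀ k, 0 < q k) (hmono : StrictMono q)
    (hzero : ∀ k, besselJ α (q k) = 0)
    (hall : ∀ x : ℝ, 0 < x → besselJ α x = 0 → ∃ k, x = q k) :
    ∃ F : ℂ → ℂ, Differentiable ℂ F ∧ (∀ z, F (-z) = F z) ∧
      (∀ ε > 0, ∃ C > 0, ∀ z : ℂ, ‖F z‖ ≤ C * Real.exp ((2 + ε) * ‖z‖)) ∧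
      (∀ lam : ℝ, (∏ k ∈ Finset.range (m + 1), (1 - lam ^ 2 / (q k) ^ 2)) ≠ 0 →
        F lam = ((besselJ α lam ^ 2 /
          ∏ k ∈ Finset.range (m + 1), (1 - lam ^ 2 / (q k) ^ 2) : ℝ) : ℂ)) ∧
      (∃ C > 0, ∀ lam : ℝ, 1 ≤ lam →
        ‖F lam‖ ≤ C * lam ^ (-(2 * α + 2 * (m : ℝ) + 3))) ∧
      MeasureTheory.IntegrableOn
        (fun lam : ℝ => lam ^ (2 * m) * ‖F lam‖ * lam ^ (2 * α + 1)) (Set.Ioi 0) :=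
  f_alpha_m_entire_general α hα m q hpos hmono hzero
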